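/- arXiv:q-bio/0311009 — 6 statements merged into one kernel-verified Lean document; each statement's English description precedes it below -/
import Mathlib

section
/- Let f₁,…,f_m ∈ ℝ[x₁,…,x_d] be nonzero polynomials, let w ∈ ℝ^d, and set g(w) = (g₁(w),…,g_m(w)) ∈ ℝ^m where g_i(w) = min_{a ∈ supp(f_i)} ⟨w,a⟩. If φ ∈ ℝ[p₁,…,p_m] satisfies φ(f₁,…,f_m) = 0, then substituting the initial forms of the coordinates into the initial form of φ also gives zero: in_{g(w)}(φ)(in_w(f₁),…,in_w(f_m)) = 0. -/
open MvPolynomial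

/-- The `w`-weight of an exponent vector `α`: `⟨w, α⟩ = Σᵢ wᵢ αᵢ`. -/
noncomputable def wt {σ : Type*} [Fintype σ] (w : σ → ℝ) (α : σ →₀ ℕ) : ℝ :=
  ∑ i, w i * (α i : ℝ)

/-- The initial form `in_w(φ)`: the sum of the terms of `φ` of minimal `w`-weight. -/
noncomputable def initForm {σ : Type*} [Fintype σ] (w : σ → ℝ)
    (φ : MvPolynomial σ ℝ) : MvPolynomial σ ℝ :=
  ∑ α ∈ φ.support.filter (fun α => ∀ β ∈ φ.support, wt w α ≤ wt w β),
    MvPolynomial.monomial α (φ.coeff α)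

section aux
variable {σ : Type*} [Fintype σ] (w : σ → ℝ)

lemma wt_zero : wt w 0 = 0 := by simp [wt]

lemma wt_add (α β : σ →₀ ℕ) : wt w (α + β) = wt w α + wt w β := by
  simp [wt, mul_add, Finset.sum_add_distrib]

/-- The `w`-weight-`r` graded component of a polynomial. -/
noncomputable def comp (r : ℝ) (p : MvPolynomial σ ℝ) : MvPolynomial σ ℝ :=
  ∑ α ∈ p.support.filter (fun α => wt w α = r), monomial α (p.coeff α)

lemma coeff_comp (r : ℝ) (p : MvPolynomial σ ℝ) (β : σ →₀ ℕ) :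
    (comp w r p).coeff β = if wt w β = r then p.coeff β else 0 := by
  classical
  rw [comp, MvPolynomial.coeff_sum]
  simp only [coeff_monomial]
  rw [Finset.sum_ite_eq' _ β (fun α => p.coeff α)]
  by_cases h : β ∈ p.support
  · simp [Finset.mem_filter, h]
  · have h0 : p.coeff β = 0 := by simpa using h
    simp [Finset.mem_filter, h, h0]

lemma comp_zero (r : ℝ) : comp w r (0 : MvPolynomial σ ℝ) = 0 := by
  ext β; simp [coeff_comp]

lemma comp_add (r : ℝ) (p q : MvPolynomial σ ℝ) :
    comp w r (p + q) = comp w r p + comp w r q := by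
  ext β; simp only [coeff_comp, coeff_add]; split <;> simp

lemma comp_smul (r : ℝ) (c : ℝ) (p : MvPolynomial σ ℝ) :
    comp w r (c • p) = c • comp w r p := by
  ext β; simp only [coeff_comp, MvPolynomial.coeff_smul, smul_eq_mul]
  split <;> simp

lemma comp_sum {ι : Type*} (r : ℝ) (s : Finset ι) (h : ι → MvPolynomial σ ℝ) :
    comp w r (∑ i ∈ s, h i) = ∑ i ∈ s, comp w r (h i) :=
  map_sum (AddMonoidHom.mk' (comp w r) (comp_add w r)) h s

lemma comp_eq_zero_of_lt {r : ℝ} {p : MvPolynomial σ ℝ}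
    (h : ∀ β ∈ p.support, r < wt w β) : comp w r p = 0 := by
  ext β
  rw [coeff_comp, MvPolynomial.coeff_zero]
  split_ifs with hwt
  · by_contra hne
    have hβ : β ∈ p.support := by simpa [MvPolynomial.mem_support_iff] using hne
    exact lt_irrefl r (hwt ▸ h β hβ)
  · rfl

lemma mem_support_one {β : σ →₀ ℕ} (hβ : β ∈ (1 : MvPolynomial σ ℝ).support) : β = 0 := by
  classical
  by_contra h
  have hc := MvPolynomial.mem_support_iff.mp hβ
  rw [MvPolynomial.coeff_one] at hc
  simp [Ne.symm h] at hc

lemma comp_one : comp w 0 (1 : MvPolynomial σ ℝ) = 1 := by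
  classical
  ext β
  rw [coeff_comp]
  by_cases hβ : β = 0
  · subst hβ; simp [wt_zero]
  · have h1 : (1 : MvPolynomial σ ℝ).coeff β = 0 := by
      rw [MvPolynomial.coeff_one]; simp [Ne.symm hβ]
    simp [h1]

lemma bound_mul {a b : ℝ} {p q : MvPolynomial σ ℝ}
    (hp : ∀ β ∈ p.support, a ≤ wt w β) (hq : ∀ β ∈ q.support, b ≤ wt w β) :
    ∀ β ∈ (p * q).support, a + b ≤ wt w β := by
  classical
  intro β hβ
  have := MvPolynomial.support_mul p q hβ
  rw [Finset.mem_add] at this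
  obtain ⟨β1, h1, β2, h2, rfl⟩ := this
  rw [wt_add]
  exact add_le_add (hp β1 h1) (hq β2 h2)

lemma comp_mul {a b : ℝ} {p q : MvPolynomial σ ℝ}
    (hp : ∀ β ∈ p.support, a ≤ wt w β) (hq : ∀ β ∈ q.support, b ≤ wt w β) :
    comp w (a + b) (p * q) = comp w a p * comp w b q := by
  classical
  ext β
  rw [coeff_comp, MvPolynomial.coeff_mul, MvPolynomial.coeff_mul]
  simp only [coeff_comp]
  by_cases h : wt w β = a + b
  · rw [if_pos h]
    refine Finset.sum_congr rfl fun x hx => ?_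
    rw [Finset.HasAntidiagonal.mem_antidiagonal] at hx
    by_cases h1 : p.coeff x.1 = 0
    · simp [h1]
    by_cases h2 : q.coeff x.2 = 0
    · simp [h2]
    have hx1 : x.1 ∈ p.support := by simpa [MvPolynomial.mem_support_iff] using h1
    have hx2 : x.2 ∈ q.support := by simpa [MvPolynomial.mem_support_iff] using h2
    have hsum : wt w x.1 + wt w x.2 = a + b := by rw [← wt_add, hx, h]
    have hwa : wt w x.1 = a := le_antisymm
      (by linarith [hq x.2 hx2]) (hp x.1 hx1)
    have hwb : wt w x.2 = b := by linarith
    rw [if_pos hwa, if_pos hwb]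
  · rw [if_neg h]
    symm
    refine Finset.sum_eq_zero fun x hx => ?_
    rw [Finset.HasAntidiagonal.mem_antidiagonal] at hx
    by_cases h1 : wt w x.1 = a
    · by_cases h2 : wt w x.2 = b
      · exact absurd (by rw [← hx, wt_add, h1, h2]) h
      · simp [h2]
    · simp [h1]

lemma comp_pow {a : ℝ} {p : MvPolynomial σ ℝ} (hp : ∀ β ∈ p.support, a ≤ wt w β) (n : ℕ) :
    (∀ β ∈ (p ^ n).support, (n : ℝ) * a ≤ wt w β) ∧
      comp w ((n : ℝ) * a) (p ^ n) = (comp w a p) ^ n := by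
  induction n with
  | zero =>
    refine ⟨?_, by simpa using comp_one w⟩
    intro β hβ
    rw [pow_zero] at hβ
    rw [mem_support_one hβ]
    simp [wt_zero]
  | succ n ih =>
    have hb : ∀ β ∈ (p ^ n * p).support, (n : ℝ) * a + a ≤ wt w β :=
      bound_mul w ih.1 hp
    have hcast : ((n + 1 : ℕ) : ℝ) * a = (n : ℝ) * a + a := by push_cast; ring
    constructor
    · intro β hβ
      rw [pow_succ] at hβ
      rw [hcast]
      exact hb β hβ
    · rw [pow_succ, hcast, comp_mul w ih.1 hp, ih.2, pow_succ]

lemma comp_prod {ι : Type*} (s : Finset ι) (p : ι → MvPolynomial σ ℝ) (a : ι → ℝ)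
    (h : ∀ i ∈ s, ∀ β ∈ (p i).support, a i ≤ wt w β) :
    (∀ β ∈ (∏ i ∈ s, p i).support, (∑ i ∈ s, a i) ≤ wt w β) ∧
      comp w (∑ i ∈ s, a i) (∏ i ∈ s, p i) = ∏ i ∈ s, comp w (a i) (p i) := by
  induction s using Finset.cons_induction with
  | empty =>
    refine ⟨?_, by simpa using comp_one w⟩
    intro β hβ
    rw [Finset.prod_empty] at hβ
    rw [mem_support_one hβ]
    simp [wt_zero]
  | cons i s hi ih =>
    have hs := ih (fun j hj => h j (Finset.mem_cons_of_mem hj))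
    have hhead := h i (Finset.mem_cons_self i s)
    rw [Finset.prod_cons, Finset.sum_cons]
    exact ⟨bound_mul w hhead hs.1, by rw [comp_mul w hhead hs.1, hs.2, Finset.prod_cons]⟩

lemma sInf_wt_le {p : MvPolynomial σ ℝ} {β : σ →₀ ℕ} (hβ : β ∈ p.support) :
    sInf (wt w '' (p.support : Set (σ →₀ ℕ))) ≤ wt w β :=
  csInf_le ((p.support.finite_toSet.image _).bddBelow) ⟨β, hβ, rfl⟩

lemma initForm_eq_comp {p : MvPolynomial σ ℝ} (hp : p ≠ 0) :
    initForm w p = comp w (sInf (wt w '' (p.support : Set (σ →₀ ℕ)))) p := by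
  classical
  have hne : (wt w '' (p.support : Set (σ →₀ ℕ))).Nonempty :=
    Set.Nonempty.image _ (by exact_mod_cast MvPolynomial.support_nonempty.mpr hp)
  rw [initForm, comp]
  refine Finset.sum_congr (Finset.filter_congr fun α hα => ?_) (fun _ _ => rfl)
  constructor
  · intro hmin
    refine le_antisymm ?_ (sInf_wt_le w hα)
    exact le_csInf hne (by rintro r ⟨β, hβ, rfl⟩; exact hmin β hβ)
  · intro heq β hβ
    rw [heq]
    exact sInf_wt_le w hβ
end aux

/-- If `φ(f₁,…,f_m) = 0` then substituting the initial forms `in_w(fᵢ)` into the initial form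
`in_{g(w)}(φ)` also gives zero, where `g(w)ᵢ = min_{a ∈ supp(fᵢ)} ⟨w,a⟩` is the
tropicalization of `fᵢ`. -/
theorem initial_form_of_relation_vanishes
    (d m : ℕ) (f : Fin m → MvPolynomial (Fin d) ℝ) (hf : ∀ i, f i ≠ 0)
    (w : Fin d → ℝ) (φ : MvPolynomial (Fin m) ℝ)
    (hφ : MvPolynomial.aeval f φ = 0) :
    MvPolynomial.aeval (fun i => initForm w (f i))
      (initForm (fun i => sInf (wt w '' ((f i).support : Set (Fin d →₀ ℕ)))) φ) = 0 := by
  classical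
  by_cases hφ0 : φ = 0
  · subst hφ0; simp [initForm]
  set g : Fin m → ℝ := fun i => sInf (wt w '' ((f i).support : Set (Fin d →₀ ℕ))) with hg
  set W : ℝ := sInf (wt g '' (φ.support : Set (Fin m →₀ ℕ))) with hW
  have hglb : ∀ i, ∀ β ∈ (f i).support, g i ≤ wt w β := fun i β hβ => sInf_wt_le w hβ
  have hWlb : ∀ α ∈ φ.support, W ≤ wt g α := fun α hα => sInf_wt_le g hα
  have hfi : ∀ i, initForm w (f i) = comp w (g i) (f i) := fun i => initForm_eq_comp w (hf i)
  have hφi : initForm g φ = comp g W φ := initForm_eq_comp g hφ0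
  -- expansion of aeval
  have hexp : ∀ (h : Fin m → MvPolynomial (Fin d) ℝ) (ψ : MvPolynomial (Fin m) ℝ),
      MvPolynomial.aeval h ψ = ∑ α ∈ ψ.support, ψ.coeff α • ∏ i, h i ^ α i := by
    intro h ψ
    conv_lhs => rw [ψ.as_sum]
    rw [map_sum]
    refine Finset.sum_congr rfl fun α hα => ?_
    rw [aeval_monomial, Finsupp.prod_pow, MvPolynomial.algebraMap_eq, ← MvPolynomial.smul_eq_C_mul]
  -- the key per-term computation
  have key : ∀ α ∈ φ.support, comp w W (∏ i, f i ^ α i) =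
      if wt g α = W then ∏ i, (comp w (g i) (f i)) ^ α i else 0 := by
    intro α hα
    have hpow := fun i => comp_pow w (hglb i) (α i)
    have hprod := comp_prod w Finset.univ (fun i => f i ^ α i) (fun i => (α i : ℝ) * g i)
      (fun i _ => (hpow i).1)
    have hwteq : ∑ i, (α i : ℝ) * g i = wt g α := by
      simp [wt, mul_comm]
    by_cases hc : wt g α = W
    · rw [if_pos hc]
      have h2 := hprod.2
      rw [hwteq, hc] at h2
      rw [h2]
      exact Finset.prod_congr rfl fun i _ => (hpow i).2
    · rw [if_neg hc]
      refine comp_eq_zero_of_lt w fun β hβ => ?_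
      have hb := hprod.1 β hβ
      rw [hwteq] at hb
      have hlt : W < wt g α := lt_of_le_of_ne (hWlb α hα) (Ne.symm hc)
      linarith
  have h0 : (0 : MvPolynomial (Fin d) ℝ) =
      ∑ α ∈ φ.support, φ.coeff α • comp w W (∏ i, f i ^ α i) := by
    calc (0 : MvPolynomial (Fin d) ℝ) = comp w W (MvPolynomial.aeval f φ) := by
          rw [hφ, comp_zero]
      _ = _ := by
          rw [hexp f φ, comp_sum]
          exact Finset.sum_congr rfl fun α _ => comp_smul w W _ _
  rw [hφi]
  have hcompφ : comp g W φ = ∑ α ∈ φ.support.filter (fun α => wt g α = W),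
      MvPolynomial.monomial α (φ.coeff α) := rfl
  rw [hcompφ, map_sum]
  have : ∀ α ∈ φ.support.filter (fun α => wt g α = W),
      MvPolynomial.aeval (fun i => initForm w (f i)) (MvPolynomial.monomial α (φ.coeff α)) =
        φ.coeff α • ∏ i, (comp w (g i) (f i)) ^ α i := by
    intro α hα
    rw [aeval_monomial, Finsupp.prod_pow, MvPolynomial.algebraMap_eq, ← MvPolynomial.smul_eq_C_mul]
    congr 1
    exact Finset.prod_congr rfl fun i _ => by rw [hfi i]
  rw [Finset.sum_congr rfl this]
  have h1 : ∑ α ∈ φ.support.filter (fun α => wt g α = W),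
      φ.coeff α • ∏ i, (comp w (g i) (f i)) ^ α i =
      ∑ α ∈ φ.support, φ.coeff α • comp w W (∏ i, f i ^ α i) := by
    rw [Finset.sum_filter]
    refine Finset.sum_congr rfl fun α hα => ?_
    rw [key α hα]
    split <;> simp
  rw [h1, ← h0]
end

section
/- Let f₁,…,f_m ∈ ℝ[x₁,…,x_d] be nonzero polynomials all of whose nonzero coefficients are positive, let w ∈ ℝ^d, and set g(w) = (g₁(w),…,g_m(w)) ∈ ℝ^m where g_i(w) = min_{a ∈ supp(f_i)} ⟨w,a⟩. Then for every nonzero φ ∈ ℝ[p₁,…,p_m] with φ(f₁,…,f_m) = 0, the initial form in_{g(w)}(φ) has at least one strictly positive and at least one strictly negative coefficient. Consequently, the image of the tropicalization g is contained in the positive tropical variety T⁺(I_f) of the vanishing ideal I_f = {φ : φ(f₁,…,f_m) = 0}. -/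
open MvPolynomial

/-- The tropicalization of the polynomial map `f = (f₁,…,f_m)`:
`g(w)ᵢ = min_{a ∈ supp(fᵢ)} ⟨w,a⟩`. -/
noncomputable def tropMap (d m : ℕ) (f : Fin m → MvPolynomial (Fin d) ℝ)
    (w : Fin d → ℝ) : Fin m → ℝ :=
  fun i => sInf (wt w '' ((f i).support : Set (Fin d →₀ ℕ)))

/-- A polynomial is positive if it is nonzero and all its nonzero coefficients are positive. -/
def IsPositivePoly {σ : Type*} (f : MvPolynomial σ ℝ) : Prop :=
  f ≠ 0 ∧ ∀ α ∈ f.support, 0 < f.coeff α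

/-- The positive tropical variety of an ideal (given as a set of polynomials): all weight
vectors `v` such that the ideal generated by the initial forms `in_v(φ)` of nonzero elements
`φ` of the set contains no nonzero polynomial with all coefficients positive. -/
def posTropicalVariety (m : ℕ) (I : Set (MvPolynomial (Fin m) ℝ)) : Set (Fin m → ℝ) :=
  {v | ¬ ∃ ψ ∈ Ideal.span {χ : MvPolynomial (Fin m) ℝ | ∃ φ ∈ I, φ ≠ 0 ∧ χ = initForm v φ},
    IsPositivePoly ψ}

open Filter Topology

section Aux

lemma aeval_apply_eq_eval {σ : Type*} (x : σ → ℝ) (p : MvPolynomial σ ℝ) :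
    aeval x p = eval x p := by
  rw [aeval_def, eval, coe_eval₂Hom]
  norm_num

lemma coeff_initForm {σ : Type*} [Fintype σ] (w : σ → ℝ) (φ : MvPolynomial σ ℝ) (β : σ →₀ ℕ) :
    (initForm w φ).coeff β =
      if β ∈ φ.support.filter (fun α => ∀ γ ∈ φ.support, wt w α ≤ wt w γ)
      then φ.coeff β else 0 := by
  classical
  rw [initForm, coeff_sum]
  by_cases hβ : β ∈ φ.support.filter (fun α => ∀ γ ∈ φ.support, wt w α ≤ wt w γ)
  · rw [if_pos hβ,
      Finset.sum_eq_single β (fun b _ hb => by rw [coeff_monomial, if_neg hb])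
        (fun h => absurd hβ h)]
    rw [coeff_monomial, if_pos rfl]
  · rw [if_neg hβ]
    refine Finset.sum_eq_zero fun b hb => ?_
    rw [coeff_monomial, if_neg (fun h : b = β => hβ (h ▸ hb))]

lemma tendsto_rpow_zero_right (c : ℝ) (hc : 0 ≤ c) :
    Tendsto (fun t : ℝ => t ^ c) (𝓝[>] (0:ℝ)) (𝓝 (if c = 0 then 1 else 0)) := by
  rcases eq_or_lt_of_le hc with h | h
  · subst h
    simp only [Real.rpow_zero, if_pos rfl]
    exact tendsto_const_nhds
  · rw [if_neg (ne_of_gt h)]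
    have h2 := (Real.continuousAt_rpow_const 0 c (Or.inr hc)).tendsto
    rw [Real.zero_rpow (ne_of_gt h)] at h2
    exact h2.mono_left nhdsWithin_le_nhds

lemma prod_rpow_pow {σ : Type*} [Fintype σ] {t : ℝ} (ht : 0 < t) (c : σ → ℝ) (α : σ →₀ ℕ) :
    (∏ i, (t ^ c i) ^ (α i)) = t ^ wt c α := by
  rw [wt, Real.rpow_def_of_pos ht, Finset.mul_sum, Real.exp_sum]
  refine Finset.prod_congr rfl fun i _ => ?_
  rw [← Real.rpow_natCast (t ^ c i) (α i), ← Real.rpow_mul ht.le, Real.rpow_def_of_pos ht]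

/-- The key analytic lemma: there is a point `L` with positive coordinates at which the
initial form of every relation vanishes. -/
lemma key_eval (d m : ℕ) (f : Fin m → MvPolynomial (Fin d) ℝ)
    (hf : ∀ i, IsPositivePoly (f i)) (w : Fin d → ℝ) :
    ∃ L : Fin m → ℝ, (∀ i, 0 < L i) ∧
      ∀ φ : MvPolynomial (Fin m) ℝ, φ ≠ 0 → MvPolynomial.aeval f φ = 0 →
        eval L (initForm (tropMap d m f w) φ) = 0 := by
  classical
  set v : Fin m → ℝ := tropMap d m f w with hv
  have hsupp : ∀ i, ((f i).support : Finset _).Nonempty := fun i =>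
    MvPolynomial.support_nonempty.mpr (hf i).1
  have hmin : ∀ i, ∀ a ∈ (f i).support, v i ≤ wt w a := by
    intro i a ha
    refine csInf_le ?_ ⟨a, ha, rfl⟩
    exact ((Set.toFinite (((f i).support : Set (Fin d →₀ ℕ)))).image (wt w)).bddBelow
  have hattain : ∀ i, ∃ a ∈ (f i).support, wt w a = v i := by
    intro i
    have : v i ∈ wt w '' ((f i).support : Set _) := by
      refine Set.Nonempty.csInf_mem ?_
        ((Set.toFinite (((f i).support : Set (Fin d →₀ ℕ)))).image (wt w))
      obtain ⟨a, ha⟩ := hsupp i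
      exact ⟨wt w a, ⟨a, ha, rfl⟩⟩
    obtain ⟨a, ha, hwa⟩ := this
    exact ⟨a, ha, hwa⟩
  -- the limit point L
  set L : Fin m → ℝ := fun i =>
    ∑ a ∈ (f i).support, (f i).coeff a * (if wt w a - v i = 0 then 1 else 0) with hL
  have hLpos : ∀ i, 0 < L i := by
    intro i
    apply Finset.sum_pos'
    · intro a ha
      have := (hf i).2 a ha
      split_ifs <;> nlinarith
    · obtain ⟨a, ha, hwa⟩ := hattain i
      refine ⟨a, ha, ?_⟩
      rw [if_pos (by rw [hwa]; ring)]
      have := (hf i).2 a ha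
      linarith
  -- the functions h_i
  set H : Fin m → ℝ → ℝ := fun i t =>
    ∑ a ∈ (f i).support, (f i).coeff a * t ^ (wt w a - v i) with hH
  have hHtendsto : ∀ i, Tendsto (H i) (𝓝[>] (0:ℝ)) (𝓝 (L i)) := by
    intro i
    apply tendsto_finset_sum
    intro a ha
    exact tendsto_const_nhds.mul
      (tendsto_rpow_zero_right _ (sub_nonneg.mpr (hmin i a ha)))
  -- factorization of f i at t^w
  have hfactor : ∀ t : ℝ, 0 < t → ∀ i,
      eval (fun j => t ^ w j) (f i) = t ^ v i * H i t := by
    intro t ht i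
    rw [eval_eq', hH, Finset.mul_sum]
    refine Finset.sum_congr rfl fun a _ => ?_
    rw [prod_rpow_pow ht w a,
      show wt w a = v i + (wt w a - v i) by ring, Real.rpow_add ht]
    ring_nf
  refine ⟨L, hLpos, ?_⟩
  intro φ hφ0 hrel
  have hφsupp : φ.support.Nonempty := MvPolynomial.support_nonempty.mpr hφ0
  -- the minimum weight μ of φ w.r.t. v
  set μ : ℝ := (φ.support.image (wt v)).min' (hφsupp.image _) with hμ
  have hμle : ∀ α ∈ φ.support, μ ≤ wt v α := fun α hα =>
    Finset.min'_le _ _ (Finset.mem_image_of_mem _ hα)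
  have hμattain : ∃ α ∈ φ.support, wt v α = μ := by
    have := Finset.min'_mem (φ.support.image (wt v)) (hφsupp.image _)
    rw [Finset.mem_image] at this
    obtain ⟨α, hα, hαμ⟩ := this
    exact ⟨α, hα, hαμ⟩
  -- characterization of the minimal terms
  have hTchar : ∀ α ∈ φ.support,
      ((∀ β ∈ φ.support, wt v α ≤ wt v β) ↔ wt v α = μ) := by
    intro α hα
    constructor
    · intro h
      obtain ⟨α₀, hα₀, hα₀μ⟩ := hμattain
      have := h α₀ hα₀
      have := hμle α hα
      linarith
    · intro h β hβ
      rw [h]; exact hμle β hβ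
  -- G
  set G : ℝ → ℝ := fun t => ∑ α ∈ φ.support,
    φ.coeff α * t ^ (wt v α - μ) * ∏ i, (H i t) ^ (α i) with hG
  have hGzero : ∀ t : ℝ, 0 < t → G t = 0 := by
    intro t ht
    have h1 : eval (fun j => t ^ w j) (aeval f φ) = 0 := by rw [hrel, map_zero]
    have h2 : eval (fun i => eval (fun j => t ^ w j) (f i)) φ = 0 := by
      rw [← aeval_apply_eq_eval] at h1 ⊢
      rw [comp_aeval_apply] at h1
      simp only [aeval_apply_eq_eval] at h1 ⊢
      exact h1
    rw [eval_eq'] at h2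
    have h3 : ∀ α ∈ φ.support,
        φ.coeff α * ∏ i, (eval (fun j => t ^ w j) (f i)) ^ (α i)
          = t ^ μ * (φ.coeff α * t ^ (wt v α - μ) * ∏ i, (H i t) ^ (α i)) := by
      intro α hα
      have : ∏ i, (eval (fun j => t ^ w j) (f i)) ^ (α i)
          = (t ^ wt v α) * ∏ i, (H i t) ^ (α i) := by
        calc ∏ i, (eval (fun j => t ^ w j) (f i)) ^ (α i)
            = ∏ i, ((t ^ v i) ^ (α i) * (H i t) ^ (α i)) := by
              refine Finset.prod_congr rfl fun i _ => ?_
              rw [hfactor t ht i, mul_pow]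
          _ = (∏ i, (t ^ v i) ^ (α i)) * ∏ i, (H i t) ^ (α i) := Finset.prod_mul_distrib
          _ = (t ^ wt v α) * ∏ i, (H i t) ^ (α i) := by rw [prod_rpow_pow ht v α]
      rw [this, show wt v α = μ + (wt v α - μ) by ring, Real.rpow_add ht]
      ring_nf
    rw [Finset.sum_congr rfl h3, ← Finset.mul_sum] at h2
    have ht0 : (t : ℝ) ^ μ ≠ 0 := ne_of_gt (Real.rpow_pos_of_pos ht μ)
    have := mul_eq_zero.mp h2
    rcases this with h | h
    · exact absurd h ht0
    · exact h
  -- limit of G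
  set Λ : ℝ := ∑ α ∈ φ.support,
    φ.coeff α * (if wt v α - μ = 0 then 1 else 0) * ∏ i, (L i) ^ (α i) with hΛ
  have hGtendsto : Tendsto G (𝓝[>] (0:ℝ)) (𝓝 Λ) := by
    apply tendsto_finset_sum
    intro α hα
    refine (tendsto_const_nhds.mul
      (tendsto_rpow_zero_right _ (sub_nonneg.mpr (hμle α hα)))).mul ?_
    apply tendsto_finset_prod
    intro i _
    exact (hHtendsto i).pow (α i)
  have hΛzero : Λ = 0 := by
    have hGzero' : Tendsto G (𝓝[>] (0:ℝ)) (𝓝 0) := by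
      refine Tendsto.congr' ?_ (tendsto_const_nhds (α := ℝ) (f := 𝓝[>] (0:ℝ)))
      filter_upwards [self_mem_nhdsWithin] with t ht
      exact (hGzero t ht).symm
    exact tendsto_nhds_unique hGtendsto hGzero'
  -- identify Λ with eval L (initForm v φ)
  have hEval : eval L (initForm v φ) = Λ := by
    rw [initForm, map_sum, hΛ]
    rw [Finset.sum_filter]
    refine Finset.sum_congr rfl fun α hα => ?_
    rw [eval_monomial, Finsupp.prod_pow]
    by_cases h : wt v α = μ
    · rw [if_pos ((hTchar α hα).mpr h), if_pos (by rw [h]; ring)]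
      ring
    · rw [if_neg (fun hc => h ((hTchar α hα).mp hc)),
        if_neg (fun hc => h (by linarith [sub_eq_zero.mp hc]))]
      ring
  rw [hEval, hΛzero]

end Aux

/-- For a positive polynomial map `f = (f₁,…,f_m)` and any `w`, the initial form
`in_{g(w)}(φ)` of any nonzero relation `φ` (with `φ(f₁,…,f_m) = 0`) has a strictly positive
and a strictly negative coefficient; consequently the image of the tropicalization `g` is
contained in the positive tropical variety of the vanishing ideal `I_f`. -/
theorem image_of_tropicalization_in_positive_tropical_variety
    (d m : ℕ) (f : Fin m → MvPolynomial (Fin d) ℝ)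
    (hf : ∀ i, IsPositivePoly (f i)) :
    (∀ (w : Fin d → ℝ) (φ : MvPolynomial (Fin m) ℝ), φ ≠ 0 →
      MvPolynomial.aeval f φ = 0 →
      (∃ α ∈ (initForm (tropMap d m f w) φ).support,
          0 < (initForm (tropMap d m f w) φ).coeff α) ∧
      (∃ α ∈ (initForm (tropMap d m f w) φ).support,
          (initForm (tropMap d m f w) φ).coeff α < 0)) ∧
    Set.range (tropMap d m f) ⊆
      posTropicalVariety m {φ | MvPolynomial.aeval f φ = 0} := by
  classical
  have main : ∀ (w : Fin d → ℝ), ∃ L : Fin m → ℝ, (∀ i, 0 < L i) ∧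
      ∀ φ : MvPolynomial (Fin m) ℝ, φ ≠ 0 → MvPolynomial.aeval f φ = 0 →
        eval L (initForm (tropMap d m f w) φ) = 0 := key_eval d m f hf
  -- auxiliary: the initial form of a nonzero polynomial is nonzero
  have hinit_ne : ∀ (v : Fin m → ℝ) (φ : MvPolynomial (Fin m) ℝ), φ ≠ 0 →
      ∃ α, α ∈ (initForm v φ).support ∧ (initForm v φ).coeff α = φ.coeff α ∧ φ.coeff α ≠ 0 := by
    intro v φ hφ0
    have hφsupp : φ.support.Nonempty := MvPolynomial.support_nonempty.mpr hφ0
    obtain ⟨α₀, hα₀mem, hα₀min⟩ := Finset.exists_min_image φ.support (wt v) hφsupp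
    have hmemT : α₀ ∈ φ.support.filter (fun α => ∀ γ ∈ φ.support, wt v α ≤ wt v γ) :=
      Finset.mem_filter.mpr ⟨hα₀mem, hα₀min⟩
    have hc : (initForm v φ).coeff α₀ = φ.coeff α₀ := by
      rw [coeff_initForm, if_pos hmemT]
    have hne : φ.coeff α₀ ≠ 0 := MvPolynomial.mem_support_iff.mp hα₀mem
    exact ⟨α₀, MvPolynomial.mem_support_iff.mpr (by rw [hc]; exact hne), hc, hne⟩
  constructor
  · intro w φ hφ0 hrel
    obtain ⟨L, hLpos, hkey⟩ := main w
    have hz := hkey φ hφ0 hrel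
    set ψ := initForm (tropMap d m f w) φ with hψ
    obtain ⟨α₀, hα₀supp, _, _⟩ := hinit_ne (tropMap d m f w) φ hφ0
    have hprodpos : ∀ α : Fin m →₀ ℕ, 0 < ∏ i, (L i) ^ (α i) :=
      fun α => Finset.prod_pos (fun i _ => pow_pos (hLpos i) _)
    rw [eval_eq'] at hz
    constructor
    · by_contra hcon
      push_neg at hcon
      have hneg : ψ.coeff α₀ < 0 :=
        lt_of_le_of_ne (hcon α₀ hα₀supp) (MvPolynomial.mem_support_iff.mp hα₀supp)
      have : 0 < ∑ α ∈ ψ.support, -(ψ.coeff α * ∏ i, (L i) ^ (α i)) := by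
        apply Finset.sum_pos'
        · intro α hα
          have h1 := hcon α hα
          have h2 := hprodpos α
          nlinarith
        · refine ⟨α₀, hα₀supp, ?_⟩
          have h2 := hprodpos α₀
          nlinarith
      rw [Finset.sum_neg_distrib] at this
      rw [hz] at this
      norm_num at this
    · by_contra hcon
      push_neg at hcon
      have hpos : 0 < ψ.coeff α₀ :=
        lt_of_le_of_ne (hcon α₀ hα₀supp) (Ne.symm (MvPolynomial.mem_support_iff.mp hα₀supp))
      have : 0 < ∑ α ∈ ψ.support, ψ.coeff α * ∏ i, (L i) ^ (α i) := by
        apply Finset.sum_pos'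
        · intro α hα
          have h1 := hcon α hα
          have h2 := hprodpos α
          nlinarith
        · refine ⟨α₀, hα₀supp, ?_⟩
          have h2 := hprodpos α₀
          nlinarith
      rw [hz] at this
      norm_num at this
  · rintro v ⟨w, rfl⟩
    rintro ⟨ψ, hmem, hψpos⟩
    obtain ⟨L, hLpos, hkey⟩ := main w
    have hker : Ideal.span {χ : MvPolynomial (Fin m) ℝ |
          ∃ φ ∈ {φ | MvPolynomial.aeval f φ = 0}, φ ≠ 0 ∧ χ = initForm (tropMap d m f w) φ}
        ≤ RingHom.ker (eval L : MvPolynomial (Fin m) ℝ →+* ℝ) := by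
      rw [Ideal.span_le]
      rintro χ ⟨φ, hφI, hφne, rfl⟩
      exact RingHom.mem_ker.mpr (hkey φ hφne hφI)
    have hψ0 : eval L ψ = 0 := RingHom.mem_ker.mp (hker hmem)
    have hψpos' : 0 < eval L ψ := by
      rw [eval_eq']
      apply Finset.sum_pos
      · intro α hα
        exact mul_pos (hψpos.2 α hα) (Finset.prod_pos (fun i _ => pow_pos (hLpos i) _))
      · exact MvPolynomial.support_nonempty.mpr hψpos.1
    rw [hψ0] at hψpos'
    norm_num at hψpos'
end

section
/- Every k×l real matrix P with all entries strictly positive and rank(P) ≤ 2 admits a factorization P = S·T where S is a k×2 matrix with all entries strictly positive and T is a 2×l matrix with all entries strictly positive. Consequently, the parameterization (S,T) ↦ S·T of the naive Bayes model with two features is surjectively positive. -/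
lemma cols_dep {k l : ℕ} (P : Matrix (Fin k) (Fin l) ℝ) (hr : P.rank ≤ 2)
    (a b c : Fin l) :
    ∃ g : Fin 3 → ℝ,
      (g 0 • (fun i => P i a) + g 1 • (fun i => P i b) + g 2 • (fun i => P i c) = 0) ∧
      ∃ i, g i ≠ 0 := by
  set v : Fin 3 → (Fin k → ℝ) := ![fun i => P i a, fun i => P i b, fun i => P i c] with hv
  have hcol : ∀ j : Fin l, (fun i => P i j) ∈ LinearMap.range P.mulVecLin := by
    intro j
    refine ⟨Pi.single j 1, ?_⟩
    simp [Matrix.mulVecLin, Matrix.mulVec_single]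
    rfl
  have hmem : ∀ m : Fin 3, v m ∈ LinearMap.range P.mulVecLin := by
    intro m; fin_cases m <;> simpa [hv] using hcol _
  have hnli : ¬ LinearIndependent ℝ v := by
    intro hli
    have hcard := finrank_span_eq_card hli
    have hle : Submodule.span ℝ (Set.range v) ≤ LinearMap.range P.mulVecLin := by
      rw [Submodule.span_le]; rintro x ⟨m, rfl⟩; exact hmem m
    have := Submodule.finrank_mono hle
    rw [hcard] at this
    rw [Matrix.rank] at hr
    simp at this
    omega
  rw [Fintype.not_linearIndependent_iff] at hnli
  obtain ⟨g, hg, hne⟩ := hnli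
  refine ⟨g, ?_, hne⟩
  rw [Fin.sum_univ_three] at hg
  simpa [hv] using hg

lemma pos_factor {k l : ℕ} (P : Matrix (Fin (k+1)) (Fin (l+1)) ℝ)
    (hP : ∀ i j, 0 < P i j) (hr : P.rank ≤ 2) :
    ∃ (S : Matrix (Fin (k+1)) (Fin 2) ℝ) (T : Matrix (Fin 2) (Fin (l+1)) ℝ),
      (∀ i j, 0 < S i j) ∧ (∀ i j, 0 < T i j) ∧ P = S * T := by
  set q : Fin (l+1) → (Fin (k+1) → ℝ) := fun j i => P i j / P 0 j with hqdef
  have hP0 : ∀ j, P 0 j ≠ 0 := fun j => (hP 0 j).ne'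
  have hqpos : ∀ j i, 0 < q j i := fun j i => div_pos (hP i j) (hP 0 j)
  have hq0 : ∀ j, q j 0 = 1 := fun j => div_self (hP0 j)
  have hPe : ∀ i j, P i j = P 0 j * q j i := by
    intro i j
    rw [hqdef, mul_comm]
    exact (div_mul_cancel₀ _ (hP0 j)).symm
  -- maximizing pair
  obtain ⟨⟨a, b⟩, -, hmax⟩ := Finset.exists_max_image (Finset.univ : Finset (Fin (l+1) × Fin (l+1)))
    (fun p => dist (q p.1) (q p.2)) ⟨(0,0), Finset.mem_univ _⟩
  have hmax' : ∀ x y, dist (q x) (q y) ≤ dist (q a) (q b) := fun x y => hmax (x, y) (Finset.mem_univ _)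
  -- each column as segment point
  have hseg : ∀ c, ∃ t : ℝ, 0 ≤ t ∧ t ≤ 1 ∧ q c = q a + t • (q b - q a) := by
    intro c
    by_cases hab : q a = q b
    · refine ⟨0, le_refl _, zero_le_one, ?_⟩
      have h := hmax' a c
      rw [hab, dist_self] at h
      have hca : q c = q a := by rw [hab]; exact (dist_le_zero.mp h).symm
      simp [hca]
    · obtain ⟨g, hg, i0, hne⟩ := cols_dep P hr a b c
      set α := g 0 * P 0 a with hα
      set β := g 1 * P 0 b with hβ
      set γ := g 2 * P 0 c with hγ
      have hrel : ∀ i, α * q a i + β * q b i + γ * q c i = 0 := by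
        intro i
        have h := congrFun hg i
        simp only [Pi.add_apply, Pi.smul_apply, Pi.zero_apply, smul_eq_mul] at h
        rw [hPe i a, hPe i b, hPe i c] at h
        simp only [hα, hβ, hγ]
        linear_combination h
      have hsum : α + β + γ = 0 := by
        have h := hrel 0
        rw [hq0 a, hq0 b, hq0 c] at h
        linarith
      have hγ0 : γ ≠ 0 := by
        intro h0
        apply hab
        have hαβ : α = -β := by linarith
        have hβ0 : β ≠ 0 := by
          intro hb0
          have hga : g 0 = 0 := by
            have ha0 : α = 0 := by rw [hαβ, hb0]; ring
            rw [hα] at ha0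
            exact (mul_eq_zero.mp ha0).resolve_right (hP0 a)
          have hgb : g 1 = 0 := (mul_eq_zero.mp (hβ ▸ hb0)).resolve_right (hP0 b)
          have hgc : g 2 = 0 := (mul_eq_zero.mp (hγ ▸ h0)).resolve_right (hP0 c)
          have hz : ∀ i : Fin 3, g i = 0 := by
            intro i
            fin_cases i
            · exact hga
            · exact hgb
            · exact hgc
          exact hne (hz i0)
        funext i
        have h := hrel i
        rw [h0, hαβ] at h
        have h2 : β * (q b i - q a i) = 0 := by linarith
        have := (mul_eq_zero.mp h2).resolve_left hβ0
        linarith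
      set t : ℝ := -β / γ with ht
      have hqc : q c = q a + t • (q b - q a) := by
        funext i
        simp only [Pi.add_apply, Pi.smul_apply, Pi.sub_apply, smul_eq_mul, ht]
        field_simp
        linear_combination hrel i - q a i * hsum
      have hd : (0:ℝ) < ‖q b - q a‖ := by
        rw [norm_pos_iff]
        intro h
        exact hab (sub_eq_zero.mp h).symm
      have hca : q c - q a = t • (q b - q a) := by rw [hqc]; abel
      have hcb : q c - q b = (t - 1) • (q b - q a) := by
        rw [hqc]; funext i; simp only [Pi.add_apply, Pi.smul_apply, Pi.sub_apply, smul_eq_mul]; ring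
      have h1 : |t| ≤ 1 := by
        have := hmax' c a
        rw [dist_eq_norm, dist_eq_norm, hca, norm_smul, Real.norm_eq_abs,
          norm_sub_rev (q a) (q b)] at this
        exact le_of_mul_le_mul_right (by simpa using this) hd
      have h2 : |t - 1| ≤ 1 := by
        have := hmax' c b
        rw [dist_eq_norm, dist_eq_norm, hcb, norm_smul, Real.norm_eq_abs,
          norm_sub_rev (q a) (q b)] at this
        exact le_of_mul_le_mul_right (by simpa using this) hd
      rw [abs_le] at h1 h2
      exact ⟨t, by linarith [h2.1], by linarith [h1.2], hqc⟩
  choose t ht0 ht1 htq using hseg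
  -- choose epsilon
  have hne : (Finset.univ : Finset (Fin (k+1))).Nonempty := Finset.univ_nonempty
  set m : ℝ := Finset.univ.inf' hne (fun i => min (q a i) (q b i)) with hmdef
  set M : ℝ := Finset.univ.sup' hne (fun i => |q a i - q b i|) with hMdef
  have hm : 0 < m := by
    rw [hmdef, Finset.lt_inf'_iff]
    intro i _
    exact lt_min (hqpos a i) (hqpos b i)
  have hM : 0 ≤ M := le_trans (abs_nonneg _)
    (Finset.le_sup' (fun i => |q a i - q b i|) (Finset.mem_univ 0))
  set ε : ℝ := m / (2 * (M + 1)) with hεdef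
  have hε : 0 < ε := div_pos hm (by linarith)
  have hεM : ε * M < m := by
    rw [hεdef, div_mul_eq_mul_div, div_lt_iff₀ (by linarith)]
    nlinarith
  have hb1 : ∀ i, m ≤ q a i := fun i =>
    le_trans (Finset.inf'_le _ (Finset.mem_univ i)) (min_le_left _ _)
  have hb2 : ∀ i, m ≤ q b i := fun i =>
    le_trans (Finset.inf'_le _ (Finset.mem_univ i)) (min_le_right _ _)
  have hb3 : ∀ i, |q a i - q b i| ≤ M := fun i =>
    Finset.le_sup' (fun i => |q a i - q b i|) (Finset.mem_univ i)
  have hSa : ∀ i, 0 < q a i + ε * (q a i - q b i) := by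
    intro i
    have h3 := abs_le.mp (hb3 i)
    nlinarith [mul_le_mul_of_nonneg_left h3.1 hε.le, hb1 i]
  have hSb : ∀ i, 0 < q b i + ε * (q b i - q a i) := by
    intro i
    have h3 := abs_le.mp (hb3 i)
    nlinarith [mul_le_mul_of_nonneg_left h3.2 hε.le, hb2 i]
  refine ⟨Matrix.of fun i c =>
      if c = 0 then q a i + ε * (q a i - q b i) else q b i + ε * (q b i - q a i),
    Matrix.of fun c j =>
      if c = 0 then P 0 j * (1 - t j + ε) / (1 + 2 * ε) else P 0 j * (t j + ε) / (1 + 2 * ε),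
    ?_, ?_, ?_⟩
  · intro i c
    fin_cases c
    · simpa using hSa i
    · simpa using hSb i
  · intro c j
    have hden : (0:ℝ) < 1 + 2 * ε := by linarith
    fin_cases c
    · simp only [Matrix.of_apply, if_pos rfl]
      exact div_pos (mul_pos (hP 0 j) (by linarith [ht1 j])) hden
    · simp only [Matrix.of_apply]
      norm_num
      exact div_pos (mul_pos (hP 0 j) (by linarith [ht0 j])) hden
  · ext i j
    rw [Matrix.mul_apply, Fin.sum_univ_two]
    simp only [Matrix.of_apply, if_pos rfl, if_neg (by norm_num : (1 : Fin 2) ≠ 0), ↓reduceIte]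
    have hqji : q j i = q a i + t j * (q b i - q a i) := by
      rw [htq j]; simp
    have hden : (1 : ℝ) + 2 * ε ≠ 0 := by positivity
    rw [hPe i j, hqji]
    field_simp
    ring

/-- Every entrywise-positive real `k×l` matrix of rank at most `2` factors as `P = S·T` with
`S` a `k×2` matrix and `T` a `2×l` matrix, both entrywise positive. Consequently the
parameterization `(S,T) ↦ S·T` of the naive Bayes model with two features is surjectively
positive: the image of the positive orthant equals the intersection of the image of the map
with the positive orthant. -/
theorem naive_bayes_surjectively_positive (k l : ℕ) :
    (∀ P : Matrix (Fin k) (Fin l) ℝ, (∀ i j, 0 < P i j) → P.rank ≤ 2 →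
      ∃ (S : Matrix (Fin k) (Fin 2) ℝ) (T : Matrix (Fin 2) (Fin l) ℝ),
        (∀ i j, 0 < S i j) ∧ (∀ i j, 0 < T i j) ∧ P = S * T) ∧
    ((fun ST : Matrix (Fin k) (Fin 2) ℝ × Matrix (Fin 2) (Fin l) ℝ => ST.1 * ST.2) ''
        {ST | (∀ i j, 0 < ST.1 i j) ∧ (∀ i j, 0 < ST.2 i j)} =
      Set.range (fun ST : Matrix (Fin k) (Fin 2) ℝ × Matrix (Fin 2) (Fin l) ℝ =>
          ST.1 * ST.2) ∩
        {P : Matrix (Fin k) (Fin l) ℝ | ∀ i j, 0 < P i j}) := by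
  have main : ∀ P : Matrix (Fin k) (Fin l) ℝ, (∀ i j, 0 < P i j) → P.rank ≤ 2 →
      ∃ (S : Matrix (Fin k) (Fin 2) ℝ) (T : Matrix (Fin 2) (Fin l) ℝ),
        (∀ i j, 0 < S i j) ∧ (∀ i j, 0 < T i j) ∧ P = S * T := by
    rcases k with _ | k
    · intro P _ _
      exact ⟨fun i _ => i.elim0, fun _ _ => 1, fun i _ => i.elim0, fun _ _ => one_pos,
        by ext i j; exact i.elim0⟩
    rcases l with _ | l
    · intro P _ _
      exact ⟨fun _ _ => 1, fun _ j => j.elim0, fun _ _ => one_pos, fun _ j => j.elim0,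
        by ext i j; exact j.elim0⟩
    exact fun P hP hr => pos_factor P hP hr
  refine ⟨main, Set.Subset.antisymm ?_ ?_⟩
  · rintro _ ⟨⟨S, T⟩, ⟨hS, hT⟩, rfl⟩
    refine ⟨⟨⟨S, T⟩, rfl⟩, fun i j => ?_⟩
    show 0 < (S * T) i j
    rw [Matrix.mul_apply]
    exact Finset.sum_pos (fun c _ => mul_pos (hS i c) (hT c j)) Finset.univ_nonempty
  · rintro P ⟨⟨⟨A, B⟩, rfl⟩, hP⟩
    simp only [Set.mem_setOf_eq] at hP
    obtain ⟨S, T, hS, hT, hPST⟩ := main _ hP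
      ((Matrix.rank_mul_le_left A B).trans (by simpa using Matrix.rank_le_card_width A))
    exact ⟨⟨S, T⟩, ⟨hS, hT⟩, hPST.symm⟩
end

section
/- There exists a constant C > 0 such that for every length n ≥ 1 and every observation σ ∈ {0,1}^n of the binary homogeneous hidden Markov model (k = l = 2), the number of vertices of the Newton polytope of the coordinate polynomial f_σ is at most C · n^{10/3}. -/
open MvPolynomial

/-- The coordinate polynomial `f_σ` of the homogeneous hidden Markov model of length `n`
with `k` hidden values and `l` observed values:
`f_σ = Σ_{h} (Π_{i=1}^{n-1} s_{h_i h_{i+1}}) (Π_{i=1}^{n} t_{h_i σ_i})`. -/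
noncomputable def hmmPoly (k l n : ℕ) (σ : Fin n → Fin l) :
    MvPolynomial ((Fin k × Fin k) ⊕ (Fin k × Fin l)) ℝ :=
  ∑ h : Fin n → Fin k,
    (∏ i : Fin (n - 1),
        MvPolynomial.X (Sum.inl
          (h ⟨i.1, lt_of_lt_of_le i.2 (Nat.sub_le n 1)⟩,
           h ⟨i.1 + 1, by have := i.2; omega⟩))) *
    (∏ i : Fin n, MvPolynomial.X (Sum.inr (h i, σ i)))

/-- The Newton polytope of the HMM coordinate polynomial `f_σ`. -/
noncomputable def hmmNewtonPolytope (k l n : ℕ) (σ : Fin n → Fin l) :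
    Set (((Fin k × Fin k) ⊕ (Fin k × Fin l)) → ℝ) :=
  convexHull ℝ {x | ∃ α ∈ (hmmPoly k l n σ).support, x = fun v => (α v : ℝ)}

namespace HMMAux

abbrev V := (Fin 2 × Fin 2) ⊕ (Fin 2 × Fin 2)

/-- product of X's is a monomial -/
lemma prod_X_eq_monomial {ι : Type*} (s : Finset ι) (v : ι → V) :
    (∏ i ∈ s, (X (v i) : MvPolynomial V ℝ)) =
      monomial (∑ i ∈ s, Finsupp.single (v i) 1) 1 := by
  classical
  induction s using Finset.induction_on with
  | empty => simp [monomial_zero', C_1]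
  | insert _ _ hx ih =>
      rw [Finset.prod_insert hx, Finset.sum_insert hx, ih, X, monomial_mul, one_mul]

/-- exponent vector of the monomial attached to a hidden path `h` -/
noncomputable def expo (m : ℕ) (σ h : Fin (m + 1) → Fin 2) : V →₀ ℕ :=
  (∑ i : Fin m, Finsupp.single
      (Sum.inl (h ⟨i.1, Nat.lt_succ_of_lt i.2⟩, h ⟨i.1 + 1, Nat.succ_lt_succ i.2⟩)) 1) +
  ∑ i : Fin (m + 1), Finsupp.single (Sum.inr (h i, σ i)) 1

lemma hmmPoly_eq (m : ℕ) (σ : Fin (m + 1) → Fin 2) :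
    hmmPoly 2 2 (m + 1) σ = ∑ h : Fin (m + 1) → Fin 2, monomial (expo m σ h) 1 := by
  unfold hmmPoly
  refine Finset.sum_congr rfl fun h _ => ?_
  rw [prod_X_eq_monomial, prod_X_eq_monomial, monomial_mul, one_mul]
  rfl

lemma support_subset (m : ℕ) (σ : Fin (m + 1) → Fin 2) :
    (hmmPoly 2 2 (m + 1) σ).support ⊆
      Finset.image (expo m σ) Finset.univ := by
  classical
  rw [hmmPoly_eq]
  refine (MvPolynomial.support_sum).trans ?_
  intro α hα
  simp only [Finset.mem_biUnion] at hα
  obtain ⟨h, _, hα⟩ := hα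
  have := MvPolynomial.support_monomial_subset hα
  simp only [Finset.mem_singleton] at this
  subst this
  exact Finset.mem_image_of_mem _ (Finset.mem_univ h)

lemma expo_apply_inl (m : ℕ) (σ h : Fin (m + 1) → Fin 2) (a b : Fin 2) :
    expo m σ h (Sum.inl (a, b)) =
      ∑ i : Fin m, if h ⟨i.1, Nat.lt_succ_of_lt i.2⟩ = a ∧ h ⟨i.1 + 1, Nat.succ_lt_succ i.2⟩ = b
        then 1 else 0 := by
  classical
  simp only [expo, Finsupp.add_apply, Finsupp.finset_sum_apply, Finsupp.single_apply]
  rw [Finset.sum_eq_zero (s := (Finset.univ : Finset (Fin (m+1)))) (by intro i _; simp),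
    add_zero]
  refine Finset.sum_congr rfl fun i _ => ?_
  by_cases hc : h ⟨i.1, Nat.lt_succ_of_lt i.2⟩ = a ∧ h ⟨i.1 + 1, Nat.succ_lt_succ i.2⟩ = b
  · simp [hc.1, hc.2]
  · rw [if_neg hc, if_neg]
    intro heq
    apply hc
    injection heq with h1
    exact ⟨congrArg Prod.fst h1, congrArg Prod.snd h1⟩

lemma expo_apply_inr (m : ℕ) (σ h : Fin (m + 1) → Fin 2) (a c : Fin 2) :
    expo m σ h (Sum.inr (a, c)) =
      ∑ i : Fin (m + 1), if h i = a ∧ σ i = c then 1 else 0 := by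
  classical
  simp only [expo, Finsupp.add_apply, Finsupp.finset_sum_apply, Finsupp.single_apply]
  rw [Finset.sum_eq_zero (s := (Finset.univ : Finset (Fin m))) (by intro i _; simp),
    zero_add]
  refine Finset.sum_congr rfl fun i _ => ?_
  by_cases hc : h i = a ∧ σ i = c
  · simp [hc.1, hc.2]
  · rw [if_neg hc, if_neg]
    intro heq
    apply hc
    injection heq with h1
    exact ⟨congrArg Prod.fst h1, congrArg Prod.snd h1⟩


def cN (m : ℕ) (h : Fin (m + 1) → Fin 2) (a b : Fin 2) : ℕ :=
  ∑ i : Fin m, if h ⟨i.1, Nat.lt_succ_of_lt i.2⟩ = a ∧ h ⟨i.1 + 1, Nat.succ_lt_succ i.2⟩ = b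
    then 1 else 0

def cM (m : ℕ) (σ h : Fin (m + 1) → Fin 2) (a c : Fin 2) : ℕ :=
  ∑ i : Fin (m + 1), if h i = a ∧ σ i = c then 1 else 0

lemma cN_le (m : ℕ) (h : Fin (m + 1) → Fin 2) (a b : Fin 2) : cN m h a b ≤ m := by
  calc cN m h a b ≤ ∑ _i : Fin m, 1 :=
        Finset.sum_le_sum (fun i _ => by split <;> omega)
    _ = m := by simp

lemma cM_le (m : ℕ) (σ h : Fin (m + 1) → Fin 2) (a c : Fin 2) : cM m σ h a c ≤ m + 1 := by
  calc cM m σ h a c ≤ ∑ _i : Fin (m + 1), 1 :=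
        Finset.sum_le_sum (fun i _ => by split <;> omega)
    _ = m + 1 := by simp

lemma sum_cN (m : ℕ) (h : Fin (m + 1) → Fin 2) :
    cN m h 0 0 + cN m h 0 1 + cN m h 1 0 + cN m h 1 1 = m := by
  have key : ∀ x y : Fin 2,
      ((if x = 0 ∧ y = 0 then 1 else 0) + (if x = 0 ∧ y = 1 then 1 else 0)
        + (if x = 1 ∧ y = 0 then 1 else 0) + (if x = 1 ∧ y = 1 then 1 else 0) : ℕ) = 1 := by
    decide
  unfold cN
  rw [← Finset.sum_add_distrib, ← Finset.sum_add_distrib, ← Finset.sum_add_distrib]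
  rw [Finset.sum_congr rfl (fun i _ => key _ _)]
  simp

lemma col_cM (m : ℕ) (σ h : Fin (m + 1) → Fin 2) (c : Fin 2) :
    cM m σ h 0 c + cM m σ h 1 c = ∑ i : Fin (m + 1), if σ i = c then 1 else 0 := by
  have key : ∀ x y c' : Fin 2,
      ((if x = 0 ∧ y = c' then 1 else 0) + (if x = 1 ∧ y = c' then 1 else 0) : ℕ)
        = if y = c' then 1 else 0 := by decide
  unfold cM
  rw [← Finset.sum_add_distrib]
  exact Finset.sum_congr rfl (fun i _ => key _ _ c)

lemma row_cM (m : ℕ) (σ h : Fin (m + 1) → Fin 2) :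
    cM m σ h 0 0 + cM m σ h 0 1
      = cN m h 0 0 + cN m h 0 1 + (if h (Fin.last m) = 0 then 1 else 0) := by
  have key : ∀ x y : Fin 2,
      ((if x = 0 ∧ y = 0 then 1 else 0) + (if x = 0 ∧ y = 1 then 1 else 0) : ℕ)
        = if x = 0 then 1 else 0 := by decide
  have key2 : ∀ x y : Fin 2,
      ((if x = 0 ∧ y = 0 then 1 else 0) + (if x = 0 ∧ y = 1 then 1 else 0) : ℕ)
        = if x = 0 then 1 else 0 := by decide
  unfold cM cN
  rw [← Finset.sum_add_distrib, ← Finset.sum_add_distrib]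
  rw [Finset.sum_congr rfl (fun (i : Fin (m+1)) _ => key (h i) (σ i)),
    Finset.sum_congr rfl (fun (i : Fin m) _ => key2 _ _)]
  rw [Fin.sum_univ_castSucc (f := fun i : Fin (m+1) => if h i = 0 then (1:ℕ) else 0)]
  rfl

lemma balance (m : ℕ) (h : Fin (m + 1) → Fin 2) :
    (cN m h 0 1 : ℤ) - cN m h 1 0
      = (if h (Fin.last m) = 1 then 1 else 0) - (if h 0 = 1 then 1 else 0) := by
  set g : ℕ → ℤ := fun j => if hj : j < m + 1 then (if h ⟨j, hj⟩ = 1 then 1 else 0) else 0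
    with hg
  have key : ∀ x y : Fin 2,
      ((if x = 0 ∧ y = 1 then 1 else 0) - (if x = 1 ∧ y = 0 then 1 else 0) : ℤ)
        = (if y = 1 then 1 else 0) - (if x = 1 then 1 else 0) := by decide
  have h1 : (cN m h 0 1 : ℤ) - cN m h 1 0
      = ∑ i : Fin m, (g (i.1 + 1) - g i.1) := by
    unfold cN
    push_cast
    rw [← Finset.sum_sub_distrib]
    refine Finset.sum_congr rfl fun i _ => ?_
    rw [key]
    have hi1 : i.1 + 1 < m + 1 := Nat.succ_lt_succ i.2
    have hi0 : i.1 < m + 1 := Nat.lt_succ_of_lt i.2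
    show _ = g (i.1+1) - g i.1
    rw [hg]
    dsimp only
    rw [dif_pos hi1, dif_pos hi0]
  rw [h1, Fin.sum_univ_eq_sum_range (fun j => g (j + 1) - g j) m, Finset.sum_range_sub g m]
  have hm : m < m + 1 := Nat.lt_succ_self m
  have h0 : 0 < m + 1 := Nat.succ_pos m
  rw [hg]
  dsimp only
  rw [dif_pos hm, dif_pos h0]
  rfl


lemma expo_inl (m : ℕ) (σ h : Fin (m + 1) → Fin 2) (a b : Fin 2) :
    expo m σ h (Sum.inl (a, b)) = cN m h a b := expo_apply_inl m σ h a b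

lemma expo_inr (m : ℕ) (σ h : Fin (m + 1) → Fin 2) (a c : Fin 2) :
    expo m σ h (Sum.inr (a, c)) = cM m σ h a c := expo_apply_inr m σ h a c

noncomputable def Φ : (V →₀ ℕ) → ℤ × ℤ × ℤ × ℤ × ℤ := fun α =>
  ((α (Sum.inl (0, 0)) : ℤ), (α (Sum.inl (0, 1)) : ℤ), (α (Sum.inr (0, 0)) : ℤ),
   (α (Sum.inl (1, 0)) : ℤ) - α (Sum.inl (0, 1)),
   (α (Sum.inr (0, 1)) : ℤ) + α (Sum.inr (0, 0)) - α (Sum.inl (0, 0)) - α (Sum.inl (0, 1)))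

noncomputable def S (m : ℕ) : Finset (ℤ × ℤ × ℤ × ℤ × ℤ) :=
  Finset.Icc (0 : ℤ) (m : ℤ) ×ˢ Finset.Icc (0 : ℤ) (m : ℤ) ×ˢ Finset.Icc (0 : ℤ) ((m : ℤ) + 1) ×ˢ
    Finset.Icc (-1 : ℤ) 1 ×ˢ Finset.Icc (0 : ℤ) 1

lemma card_S (m : ℕ) : (S m).card = (m + 1) * ((m + 1) * ((m + 2) * (3 * 2))) := by
  simp only [S, Finset.card_product, Int.card_Icc]
  have h1 : ((m : ℤ) + 1 - 0).toNat = m + 1 := by omega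
  have h2 : ((m : ℤ) + 1 + 1 - 0).toNat = m + 2 := by omega
  have h3 : ((1 : ℤ) + 1 - -1).toNat = 3 := by omega
  have h4 : ((1 : ℤ) + 1 - 0).toNat = 2 := by omega
  rw [h1, h2, h3, h4]

lemma Phi_mem (m : ℕ) (σ h : Fin (m + 1) → Fin 2) : Φ (expo m σ h) ∈ S m := by
  have hb := balance m h
  have hr := row_cM m σ h
  have h1 := cN_le m h 0 0
  have h2 := cN_le m h 0 1
  have h3 := cN_le m h 1 0
  have h4 := cM_le m σ h 0 0
  simp only [S, Φ, Finset.mem_product, Finset.mem_Icc, expo_inl, expo_inr]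
  split_ifs at hb hr <;>
    refine ⟨⟨?_, ?_⟩, ⟨?_, ?_⟩, ⟨?_, ?_⟩, ⟨?_, ?_⟩, ?_, ?_⟩ <;> omega

lemma expo_inj (m : ℕ) (σ : Fin (m + 1) → Fin 2) (h1 h2 : Fin (m + 1) → Fin 2)
    (heq : Φ (expo m σ h1) = Φ (expo m σ h2)) : expo m σ h1 = expo m σ h2 := by
  simp only [Φ, Prod.mk.injEq, expo_inl, expo_inr] at heq
  obtain ⟨e1, e2, e3, e4, e5⟩ := heq
  have sA := sum_cN m h1
  have sB := sum_cN m h2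
  have cA0 := col_cM m σ h1 0
  have cB0 := col_cM m σ h2 0
  have cA1 := col_cM m σ h1 1
  have cB1 := col_cM m σ h2 1
  rw [← cB0] at cA0
  rw [← cB1] at cA1
  have hN : ∀ a b : Fin 2, cN m h1 a b = cN m h2 a b := by
    have k1 : cN m h1 0 0 = cN m h2 0 0 := by omega
    have k2 : cN m h1 0 1 = cN m h2 0 1 := by omega
    have k3 : cN m h1 1 0 = cN m h2 1 0 := by omega
    have k4 : cN m h1 1 1 = cN m h2 1 1 := by omega
    intro a b
    fin_cases a <;> fin_cases b <;> assumption
  have hM : ∀ a c : Fin 2, cM m σ h1 a c = cM m σ h2 a c := by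
    have k1 : cM m σ h1 0 0 = cM m σ h2 0 0 := by omega
    have k2 : cM m σ h1 0 1 = cM m σ h2 0 1 := by omega
    have k3 : cM m σ h1 1 0 = cM m σ h2 1 0 := by omega
    have k4 : cM m σ h1 1 1 = cM m σ h2 1 1 := by omega
    intro a c
    fin_cases a <;> fin_cases c <;> assumption
  ext v
  rcases v with ⟨a, b⟩ | ⟨a, c⟩
  · rw [expo_inl, expo_inl]; exact hN a b
  · rw [expo_inr, expo_inr]; exact hM a c

lemma image_card_le (m : ℕ) (σ : Fin (m + 1) → Fin 2) :
    (Finset.image (expo m σ) Finset.univ).card ≤ 12 * (m + 1) ^ 3 := by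
  have hle : (Finset.image (expo m σ) Finset.univ).card ≤ (S m).card := by
    refine Finset.card_le_card_of_injOn Φ ?_ ?_
    · intro α hα
      obtain ⟨h, _, rfl⟩ := Finset.mem_image.1 hα
      exact Phi_mem m σ h
    · intro α hα β hβ hΦ
      obtain ⟨ha, _, rfl⟩ := Finset.mem_image.1 hα
      obtain ⟨hb, _, rfl⟩ := Finset.mem_image.1 hβ
      exact expo_inj m σ ha hb hΦ
  rw [card_S] at hle
  nlinarith [hle]

end HMMAux

/-- For the binary homogeneous hidden Markov model (`k = l = 2`) there is a constant `C > 0`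
such that for every length `n` and every observation `σ ∈ {0,1}^n`, the Newton polytope of
the coordinate polynomial `f_σ` (a polynomial in 8 variables) has at most `C · n^{10/3}`
vertices. -/


theorem binary_hmm_explanations_bound :
    ∃ C : ℝ, 0 < C ∧
      ∀ (n : ℕ), 1 ≤ n → ∀ σ : Fin n → Fin 2,
        ((Set.extremePoints ℝ (hmmNewtonPolytope 2 2 n σ)).ncard : ℝ) ≤
          C * (n : ℝ) ^ ((10 : ℝ) / 3) := by
  refine ⟨12, by norm_num, ?_⟩
  intro n hn σ
  obtain ⟨m, rfl⟩ : ∃ m, n = m + 1 := ⟨n - 1, by omega⟩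
  set p := hmmPoly 2 2 (m + 1) σ with hp
  set A : Set ((HMMAux.V) → ℝ) := {x | ∃ α ∈ p.support, x = fun v => (α v : ℝ)} with hAdef
  have hA : A = (fun (α : HMMAux.V →₀ ℕ) (v : HMMAux.V) => ((α v : ℝ))) '' ↑p.support := by
    ext x
    simp only [hAdef, Set.mem_setOf_eq, Set.mem_image, Finset.mem_coe]
    constructor
    · rintro ⟨α, hα, rfl⟩; exact ⟨α, hα, rfl⟩
    · rintro ⟨α, hα, rfl⟩; exact ⟨α, hα, rfl⟩
  have hfin : A.Finite := by rw [hA]; exact (Finset.finite_toSet _).image _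
  have hsub : Set.extremePoints ℝ (hmmNewtonPolytope 2 2 (m + 1) σ) ⊆ A :=
    extremePoints_convexHull_subset
  have hcount : (Set.extremePoints ℝ (hmmNewtonPolytope 2 2 (m + 1) σ)).ncard
      ≤ 12 * (m + 1) ^ 3 := by
    have c1 : (Set.extremePoints ℝ (hmmNewtonPolytope 2 2 (m + 1) σ)).ncard ≤ A.ncard :=
      Set.ncard_le_ncard hsub hfin
    have c2 : A.ncard ≤ p.support.card := by
      rw [hA]
      calc ((fun (α : HMMAux.V →₀ ℕ) (v : HMMAux.V) => ((α v : ℝ))) '' ↑p.support).ncard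
          ≤ (↑p.support : Set (HMMAux.V →₀ ℕ)).ncard := Set.ncard_image_le (Finset.finite_toSet _)
        _ = p.support.card := Set.ncard_coe_finset _
    have c3 : p.support.card ≤ (Finset.image (HMMAux.expo m σ) Finset.univ).card :=
      Finset.card_le_card (HMMAux.support_subset m σ)
    have c4 := HMMAux.image_card_le m σ
    omega
  have hcast : ((Set.extremePoints ℝ (hmmNewtonPolytope 2 2 (m + 1) σ)).ncard : ℝ)
      ≤ (12 : ℝ) * ((m : ℝ) + 1) ^ 3 := by
    calc ((Set.extremePoints ℝ (hmmNewtonPolytope 2 2 (m + 1) σ)).ncard : ℝ)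
        ≤ ((12 * (m + 1) ^ 3 : ℕ) : ℝ) := by exact_mod_cast hcount
      _ = (12 : ℝ) * ((m : ℝ) + 1) ^ 3 := by push_cast; ring
  refine hcast.trans ?_
  have h1 : (1 : ℝ) ≤ ((m : ℝ) + 1) := by
    have := Nat.cast_nonneg (α := ℝ) m
    linarith
  have key : ((m : ℝ) + 1) ^ 3 ≤ ((m : ℝ) + 1) ^ ((10 : ℝ) / 3) := by
    rw [← Real.rpow_natCast ((m : ℝ) + 1) 3]
    exact Real.rpow_le_rpow_of_exponent_le h1 (by norm_num)
  have : ((m + 1 : ℕ) : ℝ) = (m : ℝ) + 1 := by push_cast; ring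
  rw [this]
  nlinarith [key]
end

section
/- For every positive integer d there exists a constant C_d > 0 with the following property: for all integers E ≥ 1, n ≥ 1, l ≥ 2, and any family (f_σ), σ ∈ {1,…,l}^n, of nonzero polynomials in ℝ[x₁,…,x_d] all of whose exponent vectors lie in the cube [0,E]^d, the number of vertices of the Minkowski sum of the Newton polytopes NP(f_σ) over all σ ∈ {1,…,l}^n is at most l^{n · C_d · E^{d−1}}. In particular, the number of inference functions of a graphical model with d parameters, E edges and n observed variables with l values each scales at most singly exponentially in (n, E). -/
open MvPolynomial Pointwise

/-- The Newton polytope of `f`: the convex hull in `ℝ^d` of the exponent vectors of the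
monomials of `f` with nonzero coefficient. -/
noncomputable def newtonPolytope (d : ℕ) (f : MvPolynomial (Fin d) ℝ) : Set (Fin d → ℝ) :=
  convexHull ℝ {x : Fin d → ℝ | ∃ α ∈ f.support, x = fun i => (α i : ℝ)}

/-- For every fixed number `d` of parameters there is a constant `C_d > 0` such that for all
`E, n ≥ 1`, `l ≥ 2`, and every family `(f_σ)`, `σ ∈ {1,…,l}^n`, of nonzero polynomials in
`d` variables with exponent vectors in `[0,E]^d`, the Minkowski sum of the Newton polytopes
`NP(f_σ)` (the Newton polytope of the model map, whose vertices correspond to the inference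
functions) has at most `l^{n · C_d · E^{d−1}}` vertices: the number of inference functions
scales at most singly exponentially in `(n, E)`. -/
theorem inference_functions_singly_exponential_bound (d : ℕ) (hd : 0 < d) :
    ∃ C : ℝ, 0 < C ∧
      ∀ (E n l : ℕ), 1 ≤ E → 1 ≤ n → 2 ≤ l →
        ∀ f : (Fin n → Fin l) → MvPolynomial (Fin d) ℝ,
          (∀ σ, f σ ≠ 0) →
          (∀ σ, ∀ α ∈ (f σ).support, ∀ i, (α i : ℝ) ≤ (E : ℝ)) →
          ((Set.extremePoints ℝ
              (∑ σ : Fin n → Fin l, newtonPolytope d (f σ))).ncard : ℝ) ≤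
            (l : ℝ) ^ ((n : ℝ) * C * (E : ℝ) ^ ((d : ℝ) - 1)) := by
  classical
  refine ⟨3 * d, by positivity, fun E n l hE hn hl f hf0 hfE => ?_⟩
  set A : (Fin n → Fin l) → Set (Fin d → ℝ) :=
    fun σ => {x : Fin d → ℝ | ∃ α ∈ (f σ).support, x = fun i => (α i : ℝ)} with hA
  have hsum : (∑ σ : Fin n → Fin l, newtonPolytope d (f σ)) =
      convexHull ℝ (∑ σ : Fin n → Fin l, A σ) := by
    rw [convexHull_sum]; rfl
  have hl2 : (2 : ℝ) ≤ (l : ℝ) := by exact_mod_cast hl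
  have hl1 : (1 : ℝ) ≤ (l : ℝ) := by linarith
  -- extreme points lie in the finite lattice set
  set N : ℕ := l ^ n * E with hN
  set B : Finset (Fin d → ℝ) :=
    Fintype.piFinset (fun _ : Fin d => (Finset.range (N + 1)).image (fun k : ℕ => (k : ℝ)))
    with hB
  have hsub : Set.extremePoints ℝ (∑ σ : Fin n → Fin l, newtonPolytope d (f σ)) ⊆ ↑B := by
    rw [hsum]
    intro x hx
    have hx' : x ∈ ∑ σ : Fin n → Fin l, A σ := extremePoints_convexHull_subset hx
    rw [Set.mem_fintype_sum] at hx'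
    obtain ⟨g, hg, hgx⟩ := hx'
    choose α hα hgα using hg
    have hxi : ∀ i, x i = ((∑ σ : Fin n → Fin l, α σ i : ℕ) : ℝ) := by
      intro i
      rw [← hgx]
      push_cast
      simp only [Finset.sum_apply]
      exact Finset.sum_congr rfl fun σ _ => by rw [hgα σ]
    simp only [hB, Finset.mem_coe, Fintype.mem_piFinset, Finset.mem_image, Finset.mem_range]
    intro i
    refine ⟨∑ σ : Fin n → Fin l, α σ i, ?_, (hxi i).symm⟩
    have hle : ∀ σ : Fin n → Fin l, α σ i ≤ E := fun σ => by
      exact_mod_cast hfE σ (α σ) (hα σ) i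
    calc ∑ σ : Fin n → Fin l, α σ i ≤ ∑ _σ : Fin n → Fin l, E :=
          Finset.sum_le_sum fun σ _ => hle σ
      _ = l ^ n * E := by
          rw [Finset.sum_const, smul_eq_mul, Finset.card_univ]
          simp [Fintype.card_fun]
      _ < N + 1 := by omega
  have hcard : (Set.extremePoints ℝ
      (∑ σ : Fin n → Fin l, newtonPolytope d (f σ))).ncard ≤ (N + 1) ^ d := by
    calc (Set.extremePoints ℝ (∑ σ : Fin n → Fin l, newtonPolytope d (f σ))).ncard
        ≤ (↑B : Set (Fin d → ℝ)).ncard := Set.ncard_le_ncard hsub B.finite_toSet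
      _ = B.card := Set.ncard_coe_finset B
      _ ≤ (N + 1) ^ d := by
          rw [hB, Fintype.card_piFinset]
          calc ∏ _i : Fin d, ((Finset.range (N + 1)).image (fun k : ℕ => (k : ℝ))).card
              ≤ ∏ _i : Fin d, (N + 1) := Finset.prod_le_prod' fun i _ =>
                (Finset.card_image_le).trans_eq (Finset.card_range _)
            _ = (N + 1) ^ d := by simp [Finset.prod_const]
  -- rewrite the rpow exponent using the natural exponent d - 1
  have hexp : (E : ℝ) ^ ((d : ℝ) - 1) = (E : ℝ) ^ (d - 1 : ℕ) := by
    rw [← Real.rpow_natCast (E : ℝ) (d - 1)]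
    congr 1
    push_cast [Nat.cast_sub hd]
    ring
  rcases eq_or_lt_of_le (Nat.succ_le_of_lt hd) with hd1 | hd2
  · -- d = 1 : the sum is a convex subset of ℝ, so it has at most 2 extreme points
    obtain rfl : d = 1 := hd1.symm
    have h2 : (Set.extremePoints ℝ
        (∑ σ : Fin n → Fin l, newtonPolytope 1 (f σ))).ncard ≤ 2 := by
      set s := ∑ σ : Fin n → Fin l, newtonPolytope 1 (f σ) with hs
      by_contra hcon
      push_neg at hcon
      obtain ⟨t, hts, ht3⟩ := Set.exists_subset_card_eq (show 3 ≤ _ from hcon)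
      rw [Set.ncard_eq_three] at ht3
      obtain ⟨a, b, c, hab, hac, hbc, rfl⟩ := ht3
      have ha := hts (by simp : a ∈ ({a, b, c} : Set (Fin 1 → ℝ)))
      have hb := hts (by simp : b ∈ ({a, b, c} : Set (Fin 1 → ℝ)))
      have hc := hts (by simp : c ∈ ({a, b, c} : Set (Fin 1 → ℝ)))
      -- key step: the middle of three points cannot be extreme
      have key : ∀ x y z : Fin 1 → ℝ, x ∈ s → z ∈ s → y ∈ Set.extremePoints ℝ s →
          x 0 < y 0 → y 0 < z 0 → False := by
        intro x y z hx hz hy h1 h2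
        have hne : z 0 - x 0 > 0 := by linarith
        have hmem : y ∈ openSegment ℝ x z := by
          refine ⟨(z 0 - y 0) / (z 0 - x 0), (y 0 - x 0) / (z 0 - x 0),
            div_pos (by linarith) hne, div_pos (by linarith) hne, by field_simp; ring, ?_⟩
          funext i
          have : i = 0 := Subsingleton.elim i 0
          subst this
          simp only [Pi.add_apply, Pi.smul_apply, smul_eq_mul]
          field_simp
          ring
        exact absurd (hy.2 hx hz hmem) (by intro h; rw [h] at h1; linarith)
      have hval : ∀ u v : Fin 1 → ℝ, u ≠ v → u 0 ≠ v 0 := by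
        intro u v huv h
        exact huv (funext fun i => by rw [Subsingleton.elim i 0]; exact h)
      have haS := ha.1; have hbS := hb.1; have hcS := hc.1
      rcases lt_trichotomy (a 0) (b 0) with h1 | h1 | h1
      · rcases lt_trichotomy (b 0) (c 0) with h2 | h2 | h2
        · exact key a b c haS hcS hb h1 h2
        · exact hval b c hbc h2
        · rcases lt_trichotomy (a 0) (c 0) with h3 | h3 | h3
          · exact key a c b haS hbS hc h3 h2
          · exact hval a c hac h3
          · exact key c a b hcS hbS ha h3 h1
      · exact hval a b hab h1
      · rcases lt_trichotomy (a 0) (c 0) with h2 | h2 | h2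
        · exact key b a c hbS hcS ha h1 h2
        · exact hval a c hac h2
        · rcases lt_trichotomy (b 0) (c 0) with h3 | h3 | h3
          · exact key b c a hbS haS hc h3 h2
          · exact hval b c hbc h3
          · exact key c b a hcS haS hb h3 h1
    refine le_trans (show _ ≤ (2 : ℝ) from by exact_mod_cast h2) ?_
    simp only [Nat.cast_one, mul_one, sub_self, Real.rpow_zero]
    calc (2 : ℝ) ≤ (l : ℝ) := hl2
      _ = (l : ℝ) ^ (1 : ℝ) := (Real.rpow_one _).symm
      _ ≤ (l : ℝ) ^ ((n : ℝ) * 3) := by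
          apply Real.rpow_le_rpow_of_exponent_le hl1
          nlinarith [(by exact_mod_cast hn : (1 : ℝ) ≤ (n : ℝ))]
  · -- d ≥ 2 : lattice point count suffices
    have hd2' : 2 ≤ d := hd2
    have key : ((N + 1) ^ d : ℕ) ≤ l ^ (3 * n * E * d) := by
      have h1 : N + 1 ≤ 2 * l ^ n * E := by
        have h0 : 1 ≤ l ^ n * E := Nat.one_le_iff_ne_zero.2 (by positivity)
        rw [hN]
        nlinarith [h0]
      have h2 : 2 * E ≤ l ^ (2 * E) := by
        calc 2 * E ≤ 2 ^ (2 * E) := by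
              have := Nat.lt_two_pow_self (n := 2 * E); omega
          _ ≤ l ^ (2 * E) := Nat.pow_le_pow_left hl _
      have h3 : N + 1 ≤ l ^ (n + 2 * E) := by
        calc N + 1 ≤ 2 * l ^ n * E := h1
          _ = l ^ n * (2 * E) := by ring
          _ ≤ l ^ n * l ^ (2 * E) := Nat.mul_le_mul_left _ h2
          _ = l ^ (n + 2 * E) := (pow_add l n (2 * E)).symm
      calc (N + 1) ^ d ≤ (l ^ (n + 2 * E)) ^ d := Nat.pow_le_pow_left h3 d
        _ = l ^ ((n + 2 * E) * d) := by rw [← pow_mul]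
        _ ≤ l ^ (3 * n * E * d) := by
            apply Nat.pow_le_pow_right (by omega)
            have ha : n ≤ n * E := Nat.le_mul_of_pos_right n (by omega)
            have hb : E ≤ n * E := Nat.le_mul_of_pos_left E (by omega)
            nlinarith [ha, hb, Nat.zero_le d]
    have hE1 : (1 : ℝ) ≤ (E : ℝ) := by exact_mod_cast hE
    calc ((Set.extremePoints ℝ
          (∑ σ : Fin n → Fin l, newtonPolytope d (f σ))).ncard : ℝ)
        ≤ ((l ^ (3 * n * E * d) : ℕ) : ℝ) := by exact_mod_cast hcard.trans key
      _ = (l : ℝ) ^ ((3 * n * E * d : ℕ) : ℝ) := by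
          rw [Real.rpow_natCast]; push_cast; ring
      _ ≤ (l : ℝ) ^ ((n : ℝ) * (3 * d) * (E : ℝ) ^ ((d : ℝ) - 1)) := by
          apply Real.rpow_le_rpow_of_exponent_le hl1
          rw [hexp]
          have hEpow : (E : ℝ) ≤ (E : ℝ) ^ (d - 1 : ℕ) := by
            calc (E : ℝ) = (E : ℝ) ^ 1 := (pow_one _).symm
              _ ≤ (E : ℝ) ^ (d - 1 : ℕ) := pow_le_pow_right₀ hE1 (by omega)
          push_cast
          have hmul := mul_le_mul_of_nonneg_left hEpow
            (show (0:ℝ) ≤ 3 * (n:ℝ) * (d:ℝ) by positivity)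
          nlinarith [hmul]
end

section
/- Fix an integer l ≥ 2. There exists a constant C_l > 0 such that for every rooted binary tree τ with n leaves and every observation σ ∈ {1,…,l}^n, the coordinate polynomial f_σ of the homogeneous tree model on τ — obtained from the general Markov model coordinate p_σ = Σ_h Π_{internal nodes i with children j,k} s_{h_i h_j} · s_{h_i h_k} by using one common l×l matrix of indeterminates (s_{μν}) on all edges — has Newton polytope (in ℝ^{l²}) with at most C_l · n^{l²−1} vertices. -/
open MvPolynomial

/-- Rooted binary trees: a tree is either a single leaf or a root with two subtrees. -/
inductive BT : Type
  | leaf : BT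
  | node : BT → BT → BT

/-- The number of leaves of a rooted binary tree. -/
def BT.numLeaves : BT → ℕ
  | .leaf => 1
  | .node a b => a.numLeaves + b.numLeaves

/-- The leaves of a rooted binary tree. -/
def BT.Leaf : BT → Type
  | .leaf => Unit
  | .node a b => a.Leaf ⊕ b.Leaf

instance BT.fintypeLeaf : (t : BT) → Fintype t.Leaf
  | .leaf => (inferInstance : Fintype Unit)
  | .node a b =>
      letI := BT.fintypeLeaf a; letI := BT.fintypeLeaf b
      (inferInstance : Fintype (a.Leaf ⊕ b.Leaf))

/-- The partition function of the homogeneous tree model on the subtree `t` given the color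
`ρ` of its root and the observation `σ` at its leaves: the same recursion as the general
Markov model, but with a single common `l×l` matrix of indeterminates `(s_{μν})` used on
every edge; a polynomial in the `l²` variables indexed by `Fin l × Fin l`. -/
noncomputable def BT.homPartPoly (l : ℕ) :
    (t : BT) → Fin l → (t.Leaf → Fin l) → MvPolynomial (Fin l × Fin l) ℝ
  | .leaf, ρ, σ => if σ () = ρ then 1 else 0
  | .node a b, ρ, σ =>
      ∑ μ : Fin l, ∑ ν : Fin l,
        MvPolynomial.X (ρ, μ) * MvPolynomial.X (ρ, ν) *
        BT.homPartPoly l a μ (fun j => σ (Sum.inl j)) *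
        BT.homPartPoly l b ν (fun j => σ (Sum.inr j))

/-- The coordinate polynomial `f_σ` of the homogeneous tree model on `t`:
`f_σ = Σ_h Π_{internal i with children j,k} s_{h_i h_j} · s_{h_i h_k}`, the sum over all
colorations `h` of the nodes extending `σ` on the leaves, with one common matrix
`(s_{μν})` on all edges. -/
noncomputable def BT.homTreePoly (l : ℕ) (t : BT) (σ : t.Leaf → Fin l) :
    MvPolynomial (Fin l × Fin l) ℝ :=
  ∑ ρ : Fin l, BT.homPartPoly l t ρ σ

/-- The Newton polytope (in `ℝ^{l²}`) of the coordinate polynomial of the homogeneous tree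
model. -/
noncomputable def BT.homNewtonPolytope (l : ℕ) (t : BT) (σ : t.Leaf → Fin l) :
    Set (Fin l × Fin l → ℝ) :=
  convexHull ℝ {x | ∃ α ∈ (BT.homTreePoly l t σ).support, x = fun v => (α v : ℝ)}

lemma BT.one_le_numLeaves (t : BT) : 1 ≤ t.numLeaves := by
  induction t with
  | leaf => simp [BT.numLeaves]
  | node a b ha hb => simp [BT.numLeaves]; omega

lemma BT.homPartPoly_isHomogeneous (l : ℕ) (t : BT) :
    ∀ (ρ : Fin l) (σ : t.Leaf → Fin l),
      (BT.homPartPoly l t ρ σ).IsHomogeneous (2 * (t.numLeaves - 1)) := by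
  induction t with
  | leaf =>
      intro ρ σ
      rw [BT.homPartPoly]
      split
      · simpa [BT.numLeaves] using (MvPolynomial.isHomogeneous_one (Fin l × Fin l) ℝ)
      · exact MvPolynomial.isHomogeneous_zero _ _ _
  | node a b iha ihb =>
      intro ρ σ
      have ha := a.one_le_numLeaves
      have hb := b.one_le_numLeaves
      rw [BT.homPartPoly]
      apply MvPolynomial.IsHomogeneous.sum
      intro μ _
      apply MvPolynomial.IsHomogeneous.sum
      intro ν _
      have h := (((MvPolynomial.isHomogeneous_X ℝ (ρ, μ)).mul
        (MvPolynomial.isHomogeneous_X ℝ (ρ, ν))).mul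
        (iha μ (fun j => σ (Sum.inl j)))).mul (ihb ν (fun j => σ (Sum.inr j)))
      have hdeg : 1 + 1 + 2 * (a.numLeaves - 1) + 2 * (b.numLeaves - 1)
          = 2 * ((BT.node a b).numLeaves - 1) := by
        simp only [BT.numLeaves]; omega
      rw [hdeg] at h
      exact h

lemma BT.homTreePoly_isHomogeneous (l : ℕ) (t : BT) (σ : t.Leaf → Fin l) :
    (BT.homTreePoly l t σ).IsHomogeneous (2 * (t.numLeaves - 1)) := by
  exact MvPolynomial.IsHomogeneous.sum _ _ _ fun ρ _ => BT.homPartPoly_isHomogeneous l t ρ σ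

lemma sum_eq_of_mem_support {l : ℕ} {t : BT} {σ : t.Leaf → Fin l}
    {α : (Fin l × Fin l) →₀ ℕ} (hα : α ∈ (BT.homTreePoly l t σ).support) :
    ∑ v : Fin l × Fin l, α v = 2 * (t.numLeaves - 1) := by
  have h1 : α.degree = 2 * (t.numLeaves - 1) := by
    by_contra h
    exact (MvPolynomial.mem_support_iff.mp hα)
      ((BT.homTreePoly_isHomogeneous l t σ).coeff_eq_zero h)
  rw [← h1, Finsupp.degree]
  exact (Finset.sum_subset (Finset.subset_univ _)
    (fun v _ hv => Finsupp.notMem_support_iff.mp hv)).symm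

/-- The support of the homogeneous tree polynomial has at most `(2n-1)^(l²-1)` elements. -/
lemma support_card_le (l : ℕ) (hl : 2 ≤ l) (t : BT) (σ : t.Leaf → Fin l) :
    (BT.homTreePoly l t σ).support.card ≤ (2 * t.numLeaves - 1) ^ (l ^ 2 - 1) := by
  have hn := t.one_le_numLeaves
  set n := t.numLeaves with hn'
  have hlpos : 0 < l := by omega
  set v₀ : Fin l × Fin l := (⟨0, hlpos⟩, ⟨0, hlpos⟩) with hv₀
  have hbound : ∀ α ∈ (BT.homTreePoly l t σ).support, ∀ v : Fin l × Fin l,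
      α v < 2 * n - 1 := by
    intro α hα v
    have h := Finset.single_le_sum (f := fun v => α v)
      (fun i _ => Nat.zero_le _) (Finset.mem_univ v)
    rw [sum_eq_of_mem_support hα] at h
    have h' : α v ≤ 2 * (n - 1) := by simpa using h
    omega
  -- injection into functions on the complement of v₀
  classical
  have hinj : Function.Injective
      (fun (α : {x // x ∈ (BT.homTreePoly l t σ).support}) =>
        (fun v : {v : Fin l × Fin l // v ≠ v₀} =>
          (⟨α.1 v.1, hbound α.1 α.2 v.1⟩ : Fin (2 * n - 1)))) := by
    intro α β h
    have hcoord : ∀ v : Fin l × Fin l, v ≠ v₀ → α.1 v = β.1 v := by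
      intro v hv
      have := congrFun h ⟨v, hv⟩
      simpa using congrArg Fin.val this
    have hv0 : α.1 v₀ = β.1 v₀ := by
      have hs1 := sum_eq_of_mem_support α.2
      have hs2 := sum_eq_of_mem_support β.2
      rw [← Finset.add_sum_erase _ _ (Finset.mem_univ v₀)] at hs1 hs2
      have hrest : ∑ v ∈ Finset.univ.erase v₀, α.1 v
          = ∑ v ∈ Finset.univ.erase v₀, β.1 v := by
        apply Finset.sum_congr rfl
        intro v hv
        exact hcoord v (Finset.ne_of_mem_erase hv)
      omega
    apply Subtype.ext
    apply Finsupp.ext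
    intro v
    by_cases hv : v = v₀
    · rw [hv]; exact hv0
    · exact hcoord v hv
  have hcard := Fintype.card_le_of_injective _ hinj
  rw [Fintype.card_coe] at hcard
  have hcodcard : Fintype.card ({v : Fin l × Fin l // v ≠ v₀} → Fin (2 * n - 1))
      = (2 * n - 1) ^ (l ^ 2 - 1) := by
    rw [Fintype.card_fun]
    congr 1
    · exact Fintype.card_fin _
    · have : Fintype.card {v : Fin l × Fin l // v ≠ v₀}
          = Fintype.card (Fin l × Fin l) - 1 := by
        simp [Fintype.card_subtype_compl]
      rw [this]
      simp [sq]
  rw [hcodcard] at hcard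
  exact hcard

/-- For fixed `l ≥ 2` there is a constant `C_l > 0` such that for every rooted binary tree
`t` with `n` leaves and every observation `σ`, the Newton polytope of the coordinate
polynomial `f_σ` of the homogeneous tree model on `t` has at most `C_l · n^{l²−1}`
vertices. -/
theorem homogeneous_tree_model_vertex_bound (l : ℕ) (hl : 2 ≤ l) :
    ∃ C : ℝ, 0 < C ∧
      ∀ (t : BT) (σ : t.Leaf → Fin l),
        ((Set.extremePoints ℝ (BT.homNewtonPolytope l t σ)).ncard : ℝ) ≤
          C * (t.numLeaves : ℝ) ^ (l ^ 2 - 1) := by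
  refine ⟨2 ^ (l ^ 2 - 1), by positivity, fun t σ => ?_⟩
  classical
  have hn := t.one_le_numLeaves
  set n := t.numLeaves with hn'
  set S : Set (Fin l × Fin l → ℝ) :=
    {x | ∃ α ∈ (BT.homTreePoly l t σ).support, x = fun v => (α v : ℝ)} with hS
  have hSeq : S = (fun (α : (Fin l × Fin l) →₀ ℕ) => (fun v => (α v : ℝ))) ''
      ((BT.homTreePoly l t σ).support : Set _) := by
    ext x
    simp [hS, Set.mem_image, eq_comm]
  have hSfin : S.Finite := by
    rw [hSeq]; exact ((BT.homTreePoly l t σ).support.finite_toSet).image _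
  have hsub : Set.extremePoints ℝ (BT.homNewtonPolytope l t σ) ⊆ S :=
    extremePoints_convexHull_subset
  have h1 : (Set.extremePoints ℝ (BT.homNewtonPolytope l t σ)).ncard ≤ S.ncard :=
    Set.ncard_le_ncard hsub hSfin
  have h2 : S.ncard ≤ (BT.homTreePoly l t σ).support.card := by
    rw [hSeq, ← Set.ncard_coe_finset]
    exact Set.ncard_image_le ((BT.homTreePoly l t σ).support.finite_toSet)
  have h3 := support_card_le l hl t σ
  have h4 : ((2 * n - 1) ^ (l ^ 2 - 1) : ℕ) ≤ 2 ^ (l ^ 2 - 1) * n ^ (l ^ 2 - 1) := by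
    rw [← mul_pow]
    exact Nat.pow_le_pow_left (by omega) _
  have hchain : (Set.extremePoints ℝ (BT.homNewtonPolytope l t σ)).ncard
      ≤ 2 ^ (l ^ 2 - 1) * n ^ (l ^ 2 - 1) := le_trans h1 (le_trans h2 (le_trans h3 h4))
  calc ((Set.extremePoints ℝ (BT.homNewtonPolytope l t σ)).ncard : ℝ)
      ≤ ((2 ^ (l ^ 2 - 1) * n ^ (l ^ 2 - 1) : ℕ) : ℝ) := by exact_mod_cast hchain
    _ = 2 ^ (l ^ 2 - 1) * (n : ℝ) ^ (l ^ 2 - 1) := by push_cast; ring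
end
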